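/- arXiv:2505.12918 — 2 statements merged into one kernel-verified Lean document; each statement's English description precedes it below -/
import Mathlib

section
/- Let z ∈ N with z ∉ N', and let α be an IA-automorphism of N such that α² = τ_z. Then α is an inner automorphism of N: there exists u ∈ N with α = τ_u. -/
/-!
Setting: `X` is an infinite set, `F` the free group on `X`, and
`N X = F/γ₃(F)` the free nilpotent group of class two on `X`.
-/

namespace FreeNilp

/-- The free nilpotent group of class two on `X`:  `F/γ₃(F)`, where
`γ₃(F) = [[F,F],F]` is the third term of the lower central series of `F`. -/
abbrev N (X : Type*) := FreeGroup X ⧸ Subgroup.lowerCentralSeries (⊤ : Subgroup (FreeGroup X)) 2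

/-- The image in `N X` of the generator `x ∈ X`. -/
def xb {X : Type*} (x : X) : N X := QuotientGroup.mk (FreeGroup.of x)

/-- The group of inner automorphisms `Inn G`, as a subgroup of `MulAut G`;
`MulAut.conj z` is the inner automorphism `τ_z : a ↦ z a z⁻¹`. -/
def Inn (G : Type*) [Group G] : Subgroup (MulAut G) := (MulAut.conj (G := G)).range

instance Inn.normal (G : Type*) [Group G] : (Inn G).Normal := by
  constructor
  rintro m ⟨z, rfl⟩ g
  refine ⟨g z, ?_⟩
  ext a
  simp [MulAut.conj_apply, map_mul, map_inv, mul_assoc]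

/-- The outer automorphism group `Out G = Aut G / Inn G`. -/
abbrev Out (G : Type*) [Group G] := MulAut G ⧸ Inn G

/-- The quotient homomorphism `ĥ : Aut G → Out G`. -/
def hhat (G : Type*) [Group G] : MulAut G →* Out G := QuotientGroup.mk' (Inn G)

/-- IA-automorphisms: automorphisms inducing the identity on the abelianization. -/
def IA {G : Type*} [Group G] (α : MulAut G) : Prop :=
  ∀ g : G, Abelianization.of (α g) = Abelianization.of g

/-- A-symmetries in `Aut G`: automorphisms inducing the inversion automorphism
`-id : a ↦ a⁻¹` of the abelianization. -/
def ASym {G : Type*} [Group G] (θ : MulAut G) : Prop :=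
  ∀ g : G, Abelianization.of (θ g) = (Abelianization.of g)⁻¹

/-- A-symmetries in `Out G`: elements induced by A-symmetries of `Aut G`
(equivalently, inducing inversion on the abelianization). -/
def ASymO {G : Type*} [Group G] (t : Out G) : Prop :=
  ∃ θ : MulAut G, hhat G θ = t ∧ ASym θ

/-- The endomorphism of the abelianization induced by an automorphism of `G`. -/
def abMap {G : Type*} [Group G] (σ : MulAut G) : Abelianization G →* Abelianization G :=
  Abelianization.map σ.toMonoidHom

/-- `S` is a free generating set (a "ℤ-basis", written multiplicatively) of the abelian
group `H`:  `S` generates `H`, and every `ℤ`-valued function on `S` extends to a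
homomorphism `H → ℤ` (the universal property of a free abelian group with basis `S`). -/
def IsFreeAbelianBasisOf {G : Type*} [Group G] (S : Set G) (H : Subgroup G) : Prop :=
  Subgroup.closure S = H ∧
    ∀ g : G → ℤ, ∃ φ : H →* Multiplicative ℤ,
      ∀ s, s ∈ S → ∀ h : s ∈ H, φ ⟨s, h⟩ = Multiplicative.ofAdd (g s)

/-- `σ : Aut (N X)` induces an extremal involution of the abelianization `A`:
for some free generating set `{a} ∪ C` of `A` the induced map sends `a` to `a⁻¹`
and fixes `C` pointwise. -/
def AExtremal {G : Type*} [Group G] (σ : MulAut G) : Prop :=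
  ∃ (a : Abelianization G) (C : Set (Abelianization G)),
    a ∉ C ∧ IsFreeAbelianBasisOf (insert a C) ⊤ ∧
      abMap σ a = a⁻¹ ∧ ∀ c ∈ C, abMap σ c = c

/-- A basis (free generating set) of `N X`: the image of the canonical generating set
`{x̄ : x ∈ X}` under an automorphism of `N X`. -/
def IsBasisN {X : Type*} (B : Set (N X)) : Prop :=
  ∃ e : MulAut (N X), B = ⇑e '' Set.range (xb : X → N X)

/-- Extremal involutions in `Aut (N X)`: automorphisms inverting one element of some
basis of `N X` and fixing all the other elements of that basis. -/
def IsExtremalAut {X : Type*} (ψ : MulAut (N X)) : Prop :=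
  ∃ B : Set (N X), IsBasisN B ∧
    ∃ b₀ ∈ B, ψ b₀ = b₀⁻¹ ∧ ∀ b ∈ B, b ≠ b₀ → ψ b = b

/-- The subgroup `G_b = {s ∈ Out (N X) : s̄(b̄N') = b̄N'}` of `Out (N X)`, as a set:
outer automorphisms whose induced automorphism of the abelianization fixes the image
of the generator `b`. -/
def Gb {X : Type*} (b : X) : Set (Out (N X)) :=
  {s | ∀ σ : MulAut (N X), hhat (N X) σ = s →
    Abelianization.of (σ (xb b)) = Abelianization.of (xb b)}

end FreeNilp

open FreeNilp

/-!
Write `α g = g * c g`. As `α` is IA, `c g` lies in `N'`, which is central in `N`; hence `α`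
fixes `N'` pointwise and `α² = τ_z` becomes `(c g)² = ⁅g⁻¹, z⁆`. Reading this identity for a
free generator `g = y` in explicit coordinates for `N` shows that the coordinate of `z` in
`A = ℤ^(X)` at every `w ≠ y` is even; as `X` has more than one element, `z = u² q` with `q ∈ N'`.
Then `(c g)² = ⁅g⁻¹, u⁆²`, and since `N'` is torsion-free, `c g = ⁅g⁻¹, u⁆`, that is
`α g = u g u⁻¹`.
-/

namespace FreeNilp

open Subgroup
open scoped commutatorElement

section ClassTwo

variable {G : Type*} [Group G]

theorem commutatorElement_mul_mem_center_left {a b c : G} (hc : c ∈ center G) :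
    ⁅a * c, b⁆ = ⁅a, b⁆ := by
  rw [commutatorElement_def, commutatorElement_def, mul_assoc a c b,
    ← (mem_center_iff.mp hc b)]
  group

theorem commutatorElement_mul_mem_center_right {a b c : G} (hc : c ∈ center G) :
    ⁅a, b * c⁆ = ⁅a, b⁆ := by
  rw [← commutatorElement_inv, commutatorElement_mul_mem_center_left hc, commutatorElement_inv]

theorem commutatorElement_mul_right_of_le_center (hG : commutator G ≤ center G) (a b c : G) :
    ⁅a, b * c⁆ = ⁅a, b⁆ * ⁅a, c⁆ := by
  rw [commutatorElement_mul_right_eq_mul_conj, mul_assoc _ b,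
    mem_center_iff.mp (hG (commutator_mem_commutator (mem_top a) (mem_top c))) b]
  group

theorem commutatorElement_mul_left_of_le_center (hG : commutator G ≤ center G) (a b c : G) :
    ⁅a * b, c⁆ = ⁅a, c⁆ * ⁅b, c⁆ := by
  rw [← commutatorElement_inv, commutatorElement_mul_right_of_le_center hG, mul_inv_rev,
    commutatorElement_inv, commutatorElement_inv]
  exact (mem_center_iff.mp (hG (commutator_mem_commutator (mem_top b) (mem_top c))) _).symm

theorem commutator_le_closure_image2_of_closure_eq_top (hG : commutator G ≤ center G)
    {S : Set G} (hS : closure S = ⊤) : commutator G ≤ closure (Set.image2 (⁅·, ·⁆) S S) := by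
  set H := closure (Set.image2 (⁅·, ·⁆) S S)
  have hright : ∀ a ∈ S, ∀ b, ⁅a, b⁆ ∈ H := fun a ha b => by
    have : closure S ≤ H.comap (MonoidHom.mk' (⁅a, ·⁆)
        (commutatorElement_mul_right_of_le_center hG a)) :=
      (closure_le _).2 fun b hb => subset_closure ⟨a, ha, b, hb, rfl⟩
    exact this (hS ▸ mem_top b)
  have hall : ∀ a b, ⁅a, b⁆ ∈ H := fun a b => by
    have : closure S ≤ H.comap (MonoidHom.mk' (⁅·, b⁆)
        (fun a a' => commutatorElement_mul_left_of_le_center hG a a' b)) :=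
      (closure_le _).2 fun a ha => hright a ha b
    exact this (hS ▸ mem_top a)
  rw [commutator_eq_closure, closure_le]
  rintro _ ⟨a, b, rfl⟩
  exact hall a b

end ClassTwo

section IA

variable {G : Type*} [Group G] {α : MulAut G}

theorem IA.inv_mul_apply_mem_commutator (hα : IA α) (g : G) : g⁻¹ * α g ∈ commutator G :=
  QuotientGroup.eq.mp (hα g).symm

theorem IA.apply_eq_self_of_mem_commutator (hG : commutator G ≤ center G) (hα : IA α)
    {q : G} (hq : q ∈ commutator G) : α q = q := by
  have hfix : commutator G ≤ MonoidHom.eqLocus α.toMonoidHom (MonoidHom.id G) := by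
    rw [commutator_eq_closure, closure_le]
    rintro _ ⟨a, b, rfl⟩
    have hdefect : ∀ g, α g = g * (g⁻¹ * α g) := fun g => by group
    change α ⁅a, b⁆ = ⁅a, b⁆
    rw [map_commutatorElement, hdefect a, hdefect b,
      commutatorElement_mul_mem_center_left (hG (hα.inv_mul_apply_mem_commutator a)),
      commutatorElement_mul_mem_center_right (hG (hα.inv_mul_apply_mem_commutator b))]
  exact hfix hq

theorem IA.inv_mul_apply_sq (hG : commutator G ≤ center G) (hα : IA α) {z : G}
    (h : α ^ 2 = MulAut.conj z) (g : G) : (g⁻¹ * α g) ^ 2 = ⁅g⁻¹, z⁆ := by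
  have hsq : α (α g) = z * g * z⁻¹ := by
    simpa [sq, MulAut.conj_apply] using DFunLike.congr_fun h g
  have hdefect : α (α g) = α g * (g⁻¹ * α g) := by
    conv_lhs => rw [show α g = g * (g⁻¹ * α g) by group]
    rw [map_mul, hα.apply_eq_self_of_mem_commutator hG (hα.inv_mul_apply_mem_commutator g)]
  calc (g⁻¹ * α g) ^ 2 = g⁻¹ * (α g * (g⁻¹ * α g)) := by rw [sq]; group
    _ = ⁅g⁻¹, z⁆ := by rw [← hdefect, hsq, commutatorElement_def]; group

theorem IA.eq_conj_of_sq_eq_conj (hG : commutator G ≤ center G)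
    (htors : ∀ e ∈ commutator G, e ^ 2 = 1 → e = 1) (hα : IA α) {z : G}
    (h : α ^ 2 = MulAut.conj z) {u : G} (hu : (u ^ 2)⁻¹ * z ∈ center G) :
    α = MulAut.conj u := by
  ext g
  set c := g⁻¹ * α g
  set k := ⁅g⁻¹, u⁆
  have hc : c ∈ commutator G := hα.inv_mul_apply_mem_commutator g
  have hk : k ∈ commutator G := commutator_mem_commutator (mem_top _) (mem_top _)
  have hck : c ^ 2 = k ^ 2 := by
    rw [hα.inv_mul_apply_sq hG h, ← mul_inv_cancel_left (u ^ 2) z,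
      commutatorElement_mul_mem_center_right hu, sq u,
      commutatorElement_mul_right_of_le_center hG, sq]
  have : c * k⁻¹ = 1 := by
    refine htors _ (mul_mem hc (inv_mem hk)) ?_
    rw [(show Commute c k⁻¹ from mem_center_iff.mp (hG (inv_mem hk)) c).mul_pow, inv_pow, hck,
      mul_inv_cancel]
  calc α g = g * c := (mul_inv_cancel_left g (α g)).symm
    _ = g * k := by rw [mul_inv_eq_one.mp this]
    _ = MulAut.conj u g := by simp [k, commutatorElement_def, MulAut.conj_apply]; group

end IA

section Coordinates

variable {X : Type*} [LinearOrder X]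

noncomputable def cocycle : (X →₀ ℤ) →ₗ[ℤ] (X →₀ ℤ) →ₗ[ℤ] (X × X →₀ ℤ) :=
  Finsupp.lsum ℤ fun x => LinearMap.toSpanSingleton ℤ _
    (Finsupp.lsum ℤ fun y => LinearMap.toSpanSingleton ℤ _
      (if x < y then Finsupp.single (x, y) 1 else 0))

theorem cocycle_single_single (x y : X) :
    cocycle (Finsupp.single x 1) (Finsupp.single y 1) =
      if x < y then Finsupp.single (x, y) (1 : ℤ) else 0 := by
  simp [cocycle]

theorem cocycle_apply (a b : X →₀ ℤ) (p q : X) :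
    cocycle a b (p, q) = if p < q then a p * b q else 0 := by
  induction a using Finsupp.induction_linear with
  | zero => simp
  | add a a' ha ha' =>
    simp only [map_add, LinearMap.add_apply, Finsupp.add_apply, ha, ha']
    split <;> ring
  | single x m =>
    induction b using Finsupp.induction_linear with
    | zero => simp
    | add b b' hb hb' =>
      simp only [map_add, Finsupp.add_apply, hb, hb']
      split <;> ring
    | single y n =>
      simp only [cocycle, Finsupp.lsum_single, LinearMap.toSpanSingleton_apply,
        LinearMap.smul_apply, Finsupp.smul_apply, apply_ite (fun f : X × X →₀ ℤ => f (p, q)),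
        Finsupp.single_apply, Finsupp.coe_zero, Pi.zero_apply, smul_eq_mul]
      split_ifs <;> simp_all [Prod.ext_iff]
      grind

/-- Coordinates for the free nilpotent group of class two on `X`: `lin` is the image in the
abelianization `X →₀ ℤ`, and `quad` records the exponents of the basic commutators `⁅x, y⁆`
with `x < y`. -/
@[ext]
structure Model (X : Type*) [LinearOrder X] where
  lin : X →₀ ℤ
  quad : X × X →₀ ℤ

namespace Model

noncomputable instance : Group (Model X) where
  mul m n := ⟨m.lin + n.lin, m.quad + n.quad + cocycle m.lin n.lin⟩
  one := ⟨0, 0⟩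
  inv m := ⟨-m.lin, -m.quad + cocycle m.lin m.lin⟩
  mul_assoc m n k := by
    ext : 1
    · simp [HMul.hMul, Mul.mul, add_assoc]
    · simp [HMul.hMul, Mul.mul]
      module
  one_mul m := by
    show Model.mk (0 + m.lin) (0 + m.quad + cocycle 0 m.lin) = m
    ext : 1 <;> simp
  mul_one m := by
    show Model.mk (m.lin + 0) (m.quad + 0 + cocycle m.lin 0) = m
    ext : 1 <;> simp
  inv_mul_cancel m := by
    show Model.mk (-m.lin + m.lin) ((-m.quad + cocycle m.lin m.lin) + m.quad
      + cocycle (-m.lin) m.lin) = ⟨0, 0⟩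
    ext : 1 <;> simp

theorem mul_def (m n : Model X) :
    m * n = ⟨m.lin + n.lin, m.quad + n.quad + cocycle m.lin n.lin⟩ := rfl

theorem one_def : (1 : Model X) = ⟨0, 0⟩ := rfl

theorem inv_def (m : Model X) : m⁻¹ = ⟨-m.lin, -m.quad + cocycle m.lin m.lin⟩ := rfl

theorem commutatorElement_eq (m n : Model X) :
    ⁅m, n⁆ = ⟨0, cocycle m.lin n.lin - cocycle n.lin m.lin⟩ := by
  rw [commutatorElement_def]
  ext : 1 <;> simp [mul_def, inv_def]
  module

theorem quad_mul_of_lin_eq_zero {m : Model X} (hm : m.lin = 0) (n : Model X) :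
    (m * n).quad = m.quad + n.quad := by
  simp [mul_def, hm]

theorem mem_center_of_lin_eq_zero {m : Model X} (hm : m.lin = 0) : m ∈ center (Model X) := by
  rw [mem_center_iff]
  intro g
  ext : 1 <;> simp [mul_def, hm, add_comm]

theorem lowerCentralSeries_two_eq_bot : (⊤ : Subgroup (Model X)).lowerCentralSeries 2 = ⊥ := by
  refine Subgroup.lowerCentralSeries_succ_eq_bot _ ?_
  rw [top_lowerCentralSeries_one, commutator_eq_closure, closure_le]
  rintro _ ⟨m, n, rfl⟩
  exact mem_center_of_lin_eq_zero (by rw [commutatorElement_eq])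

def linHom : Model X →* Multiplicative (X →₀ ℤ) where
  toFun m := Multiplicative.ofAdd m.lin
  map_one' := rfl
  map_mul' _ _ := rfl

theorem even_lin_of_sq_eq_commutatorElement {m n : Model X} (hm : m.lin = 0) {y w : X}
    (hyw : y ≠ w) (h : m ^ 2 = ⁅(⟨Finsupp.single y 1, 0⟩ : Model X), n⁆) : Even (n.lin w) := by
  have hquad : m.quad + m.quad = cocycle (Finsupp.single y 1) n.lin
      - cocycle n.lin (Finsupp.single y 1) := by
    rw [← quad_mul_of_lin_eq_zero hm, ← sq, h, commutatorElement_eq]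
  rcases hyw.lt_or_gt with hlt | hlt
  · have := DFunLike.congr_fun hquad (y, w)
    simp [cocycle_apply, hlt, hyw] at this
    exact ⟨_, this.symm⟩
  · have := DFunLike.congr_fun hquad (w, y)
    simp [cocycle_apply, hlt, hyw.symm] at this
    exact ⟨-m.quad (w, y), by omega⟩

end Model

end Coordinates

section FreeNilpotent

variable {X : Type*}

theorem closure_range_xb : closure (Set.range (xb : X → N X)) = ⊤ := by
  rw [show Set.range (xb : X → N X) = QuotientGroup.mk' _ '' Set.range FreeGroup.of by
    rw [← Set.range_comp]; rfl, ← MonoidHom.map_closure, FreeGroup.closure_range_of]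
  exact map_top_of_surjective _ (QuotientGroup.mk'_surjective _)

theorem commutator_le_center : commutator (N X) ≤ center (N X) := by
  rw [← commutator_top_right_eq_bot_iff_le_center]
  change (⊤ : Subgroup (N X)).lowerCentralSeries 2 = ⊥
  rw [← map_top_of_surjective _ (QuotientGroup.mk'_surjective _), ← map_lowerCentralSeries,
    Subgroup.map_eq_bot_iff, QuotientGroup.ker_mk']

noncomputable def ofLin : Multiplicative (X →₀ ℤ) →* Abelianization (N X) :=
  AddMonoidHom.toMultiplicativeLeft
    (Finsupp.liftAddHom fun x => zmultiplesHom _ (Additive.ofMul (Abelianization.of (xb x))))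

open scoped IsMulCommutative in
noncomputable def fromQuad : Multiplicative (X × X →₀ ℤ) →* N X :=
  (center (N X)).subtype.comp <| AddMonoidHom.toMultiplicativeLeft <|
    Finsupp.liftAddHom fun p => zmultiplesHom _ <| Additive.ofMul
      ⟨⁅xb p.1, xb p.2⁆, commutator_le_center (commutator_mem_commutator (mem_top _) (mem_top _))⟩

theorem fromQuad_single (p : X × X) (n : ℤ) :
    fromQuad (Multiplicative.ofAdd (Finsupp.single p n)) = ⁅xb p.1, xb p.2⁆ ^ n := by
  simp [fromQuad]

variable [LinearOrder X]

noncomputable def toModel : N X →* Model X :=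
  QuotientGroup.lift _ (FreeGroup.lift fun x => ⟨Finsupp.single x 1, 0⟩) <| by
    rw [← Subgroup.map_eq_bot_iff, map_lowerCentralSeries, ← le_bot_iff,
      ← Model.lowerCentralSeries_two_eq_bot]
    exact lowerCentralSeries_mono 2 le_top

theorem toModel_xb (x : X) : toModel (xb x) = ⟨Finsupp.single x 1, 0⟩ := by
  rw [toModel, xb, QuotientGroup.lift_mk, FreeGroup.lift_apply_of]

theorem lin_toModel_eq_zero_of_mem_commutator {g : N X} (hg : g ∈ commutator (N X)) :
    (toModel g).lin = 0 :=
  congrArg Multiplicative.toAdd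
    (Abelianization.commutator_subset_ker (Model.linHom.comp toModel) hg)

theorem fromQuad_toModel {e : N X} (he : e ∈ commutator (N X)) :
    fromQuad (Multiplicative.ofAdd (toModel e).quad) = e := by
  have hle : closure (Set.image2 (⁅·, ·⁆) (Set.range xb) (Set.range xb)) ≤ commutator (N X) :=
    (closure_le _).2 fun _ ⟨a, _, b, _, hab⟩ =>
      hab ▸ commutator_mem_commutator (mem_top a) (mem_top b)
  have hgen := commutator_le_closure_image2_of_closure_eq_top commutator_le_center
    closure_range_xb he
  clear he
  induction hgen using closure_induction with
  | mem _ hgen =>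
    obtain ⟨_, ⟨x, rfl⟩, _, ⟨y, rfl⟩, rfl⟩ := hgen
    rw [map_commutatorElement, toModel_xb, toModel_xb, Model.commutatorElement_eq]
    dsimp only
    rw [cocycle_single_single, cocycle_single_single]
    rcases lt_trichotomy x y with hxy | rfl | hxy
    · simp [hxy, hxy.not_gt, fromQuad_single]
    · simp
    · simp [hxy, hxy.not_gt, ofAdd_neg, fromQuad_single, commutatorElement_inv]
  | one => simp [Model.one_def]
  | mul a b ha _ iha ihb =>
    rw [map_mul, Model.quad_mul_of_lin_eq_zero (lin_toModel_eq_zero_of_mem_commutator (hle ha)),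
      ofAdd_add, map_mul, iha, ihb]
  | inv a ha iha =>
    simp [Model.inv_def, lin_toModel_eq_zero_of_mem_commutator (hle ha), ofAdd_neg, iha]

theorem eq_one_of_mem_commutator_of_sq_eq_one {e : N X} (he : e ∈ commutator (N X))
    (hsq : e ^ 2 = 1) : e = 1 := by
  have hquad : (toModel e).quad + (toModel e).quad = 0 := by
    rw [← Model.quad_mul_of_lin_eq_zero (lin_toModel_eq_zero_of_mem_commutator he), ← map_mul,
      ← sq, hsq, map_one, Model.one_def]
  have hquad' : (toModel e).quad = 0 := by
    ext p
    have := DFunLike.congr_fun hquad p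
    simp only [Finsupp.add_apply, Finsupp.coe_zero, Pi.zero_apply] at this ⊢
    omega
  rw [← fromQuad_toModel he, hquad', ofAdd_zero, map_one]

theorem ofLin_comp_toModel :
    ofLin.comp (Model.linHom.comp toModel) = Abelianization.of (G := N X) := by
  refine QuotientGroup.monoidHom_ext _ (FreeGroup.ext_hom _ _ fun x => ?_)
  change ofLin (Model.linHom (toModel (xb x))) = Abelianization.of (xb x)
  simp [toModel_xb, Model.linHom, ofLin]

theorem exists_inv_sq_mul_mem_commutator {z : N X} (hz : ∀ w, Even ((toModel z).lin w)) :
    ∃ u : N X, (u ^ 2)⁻¹ * z ∈ commutator (N X) := by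
  obtain ⟨t, ht⟩ : ∃ t, (toModel z).lin = t + t :=
    ⟨(toModel z).lin.mapRange (· / 2) (by simp), by
      ext w
      obtain ⟨r, hr⟩ := hz w
      simp only [Finsupp.add_apply, Finsupp.mapRange_apply]
      omega⟩
  obtain ⟨u, hu⟩ : ∃ u, Abelianization.of u = ofLin (Multiplicative.ofAdd t) :=
    QuotientGroup.mk_surjective _
  refine ⟨u, QuotientGroup.eq.mp ?_⟩
  calc Abelianization.of (u ^ 2) = ofLin (Multiplicative.ofAdd (t + t)) := by
        rw [map_pow, hu, ofAdd_add, map_mul, sq]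
    _ = Abelianization.of z := by
        rw [← ht, ← ofLin_comp_toModel]
        rfl

end FreeNilpotent

end FreeNilp

theorem stmt2_general (X : Type*) [Infinite X] (z : N X)
    (α : MulAut (N X)) (hα : IA α) (h : α ^ 2 = MulAut.conj z) :
    ∃ u : N X, α = MulAut.conj u := by
  let : LinearOrder X := IsWellOrder.linearOrder WellOrderingRel
  have hlin_even : ∀ w, Even ((toModel z).lin w) := fun w => by
    obtain ⟨y, hyw⟩ := exists_ne w
    refine Model.even_lin_of_sq_eq_commutatorElement
      (lin_toModel_eq_zero_of_mem_commutator (hα.inv_mul_apply_mem_commutator (xb y)⁻¹)) hyw ?_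
    rw [← toModel_xb, ← map_commutatorElement, ← map_pow,
      hα.inv_mul_apply_sq commutator_le_center h, inv_inv]
  obtain ⟨u, hu⟩ := exists_inv_sq_mul_mem_commutator hlin_even
  exact ⟨u, hα.eq_conj_of_sq_eq_conj commutator_le_center
    (fun _ => eq_one_of_mem_commutator_of_sq_eq_one) h (commutator_le_center hu)⟩

/-- If `z ∈ N \ N'` and `α` is an IA-automorphism of `N` with
`α² = τ_z`, then `α` is inner: `α = τ_u` for some `u ∈ N`. -/
theorem stmt2 (X : Type*) [Infinite X] (z : N X) (hz : z ∉ commutator (N X))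
    (α : MulAut (N X)) (hα : IA α) (h : α ^ 2 = MulAut.conj z) :
    ∃ u : N X, α = MulAut.conj u :=
  stmt2_general X z α hα h
end

section
/- Let Π = Sym(X) be the symmetric group of an infinite set X, and let U, V be disjoint subsets of X, each of cardinality strictly less than the cardinality of X. Then Π is generated by the union of the pointwise stabilizers Π_(U) and Π_(V); that is, the subgroup generated by Π_(U) ∪ Π_(V) is all of Sym(X). -/
open FreeNilp

/-!
An injection from a subset of `X` of size `< |X|` into `X` extends to a permutation, since both
complements have size `|X|`. So if `π` maps `U` off `V`, extending `π` on `π⁻¹ V` together with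
the identity on `U` gives `β ∈ Π_(U)` agreeing with `π` on `π⁻¹ V`, whence `π β⁻¹ ∈ Π_(V)`.
An arbitrary `π` is first corrected by some `β ∈ Π_(V)` moving `U` into the large complement of
`U ∪ V ∪ π⁻¹ V`.
-/

open Cardinal Set Function MulAction

section

variable {α : Type*}

theorem coe_fixingSubgroup_perm (s : Set α) :
    (fixingSubgroup (Equiv.Perm α) s : Set (Equiv.Perm α)) = {π | ∀ x ∈ s, π x = x} :=
  Set.ext fun _ => mem_fixingSubgroup_iff _

theorem exists_perm_mem_fixingSubgroup_extend {A B : Set α} (f : A → α) (hf : Injective f)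
    (hAB : Disjoint A B) (hfB : ∀ a, f a ∉ B) (h : #(A ∪ B : Set α) < #α) :
    ∃ σ ∈ fixingSubgroup (Equiv.Perm α) B, ∀ a : A, σ a = f a := by
  classical
  let g : (A ∪ B : Set α) ↪ α :=
    (Equiv.Set.union hAB).toEmbedding.trans
      ⟨Sum.elim f Subtype.val,
        hf.sumElim Subtype.val_injective fun a b hab => hfB a (hab ▸ b.2)⟩
  obtain ⟨σ, hσ⟩ := extend_function_of_lt g h ⟨Equiv.refl α⟩
  refine ⟨σ, (mem_fixingSubgroup_iff _).mpr fun b hb => ?_, fun a => ?_⟩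
  · rw [Equiv.Perm.smul_def, hσ ⟨b, Or.inr hb⟩]
    simp [g, Equiv.Set.union_apply_right hAB (a := ⟨b, Or.inr hb⟩) hb]
  · rw [hσ ⟨a, Or.inl a.2⟩]
    simp [g, Equiv.Set.union_apply_left hAB (a := ⟨a, Or.inl a.2⟩) a.2]

variable [Infinite α]

theorem Cardinal.mk_union_lt_of_lt {s t : Set α} (hs : #s < #α) (ht : #t < #α) :
    #(s ∪ t : Set α) < #α :=
  (mk_union_le s t).trans_lt (add_lt_of_lt (aleph0_le_mk α) hs ht)

theorem perm_mem_fixingSubgroup_sup_of_disjoint_preimage {U V : Set α} (hUV : Disjoint U V)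
    (hU : #U < #α) (hV : #V < #α) {π : Equiv.Perm α} (hπ : Disjoint (π ⁻¹' V) U) :
    π ∈ fixingSubgroup (Equiv.Perm α) V ⊔ fixingSubgroup (Equiv.Perm α) U := by
  have hπV : #(π ⁻¹' V) < #α :=
    (mk_preimage_of_injective _ _ π.injective).trans_lt hV
  obtain ⟨β, hβU, hβ⟩ := exists_perm_mem_fixingSubgroup_extend (fun a : π ⁻¹' V => π a)
    (π.injective.comp Subtype.val_injective) hπ
    (fun a ha => disjoint_left.mp hUV ha a.2) (mk_union_lt_of_lt hπV hU)
  have hπβ : π * β⁻¹ ∈ fixingSubgroup (Equiv.Perm α) V := by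
    refine (mem_fixingSubgroup_iff _).mpr fun v hv => ?_
    have hβv : β (π⁻¹ v) = v := by
      simpa using hβ ⟨π⁻¹ v, by simpa using hv⟩
    rw [Equiv.Perm.smul_def, Equiv.Perm.mul_apply, Equiv.Perm.inv_eq_iff_eq.mpr hβv.symm]
    exact π.apply_symm_apply v
  simpa using Subgroup.mul_mem_sup hπβ hβU

theorem exists_perm_mem_fixingSubgroup_disjoint_preimage {U V C : Set α} (hUV : Disjoint U V)
    (hU : #U < #α) (hV : #V < #α) (hC : #C < #α) :
    ∃ β ∈ fixingSubgroup (Equiv.Perm α) V, Disjoint (β ⁻¹' C) U := by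
  set S := U ∪ V ∪ C
  have hS : #S < #α := mk_union_lt_of_lt (mk_union_lt_of_lt hU hV) hC
  obtain ⟨e⟩ : #U ≤ #(Sᶜ : Set α) := by rw [mk_compl_of_infinite S hS]; exact hU.le
  have heS (u : U) : (e u : α) ∉ S := (e u).2
  obtain ⟨β, hβV, hβ⟩ := exists_perm_mem_fixingSubgroup_extend (fun u => (e u : α))
    (Subtype.val_injective.comp e.injective) hUV
    (fun u hu => heS u (Or.inl (Or.inr hu))) (mk_union_lt_of_lt hU hV)
  refine ⟨β, hβV, disjoint_right.mpr fun u hu huC => heS ⟨u, hu⟩ (Or.inr ?_)⟩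
  rwa [← hβ ⟨u, hu⟩]

theorem fixingSubgroup_perm_sup_eq_top {U V : Set α} (hUV : Disjoint U V)
    (hU : #U < #α) (hV : #V < #α) :
    fixingSubgroup (Equiv.Perm α) U ⊔ fixingSubgroup (Equiv.Perm α) V = ⊤ := by
  refine eq_top_iff.mpr fun π _ => ?_
  rw [sup_comm]
  obtain ⟨β, hβV, hβ⟩ := exists_perm_mem_fixingSubgroup_disjoint_preimage hUV hU hV
    (C := π ⁻¹' V) ((mk_preimage_of_injective _ _ π.injective).trans_lt hV)
  have hπβ := perm_mem_fixingSubgroup_sup_of_disjoint_preimage hUV hU hV (π := π * β) hβ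
  simpa using Subgroup.mul_mem _ hπβ (Subgroup.inv_mem _ (Subgroup.mem_sup_left hβV))

end

/-- If `U, V` are disjoint subsets of an infinite set `X`, both of
cardinality `< |X|`, then `Sym(X)` is generated by the pointwise stabilizers of `U`
and of `V`. -/
theorem stmt12 (X : Type*) [Infinite X] (U V : Set X) (hd : Disjoint U V)
    (hU : Cardinal.mk U < Cardinal.mk X) (hV : Cardinal.mk V < Cardinal.mk X) :
    Subgroup.closure ({π : Equiv.Perm X | ∀ u ∈ U, π u = u} ∪
      {π : Equiv.Perm X | ∀ v ∈ V, π v = v}) = ⊤ := by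
  rw [← coe_fixingSubgroup_perm, ← coe_fixingSubgroup_perm, Subgroup.closure_union,
    Subgroup.closure_eq, Subgroup.closure_eq]
  exact fixingSubgroup_perm_sup_eq_top hd hU hV
end
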